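/- If f : ℝ² → ℂ is a polyanalytic function of order n+1 (i.e., ∂_{z̄}^{n+1} f = 0), then there exist unique holomorphic functions f_0, …, f_n on ℂ such that f(z) = Σ_{k=0}^{n} z̄^k f_k(z) for all z ∈ ℂ. -/

import Mathlib

open Complex Finset

/-- Anti-Wirtinger derivative `∂_z̄ = (1/2)(∂_x + i∂_y)`, as an operator on
functions `ℂ → ℂ` (using the real Fréchet derivative). -/
noncomputable def wirtingerZBar : (ℂ → ℂ) → (ℂ → ℂ) := fun f z =>
  (1 / 2 : ℂ) * (fderiv ℝ f z 1 + Complex.I * fderiv ℝ f z Complex.I)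

/-!
On `z̄ᵏ h` with `h` holomorphic, `∂_z̄` acts as `d/dz̄` (it kills `h` by Cauchy–Riemann), so on
sums `∑ z̄ᵏ fₖ` with holomorphic coefficients it shifts the coefficients down and multiplies them
by `k + 1`. Existence is by induction on `n`: decompose `∂_z̄ f = ∑ z̄ᵏ gₖ`, take the formal
primitive `F = ∑ z̄ᵏ⁺¹ gₖ / (k + 1)`, and `f - F` is holomorphic because `∂_z̄ (f - F) = 0`.
Uniqueness is by induction too: `∂_z̄` of a vanishing sum is a vanishing sum with the shifted
coefficients, which therefore vanish, and then so does `f₀`.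
-/
section Calculus

variable {f g : ℂ → ℂ} {z : ℂ}

theorem wirtingerZBar_eq_zero_iff (hf : DifferentiableAt ℝ f z) :
    wirtingerZBar f z = 0 ↔ DifferentiableAt ℂ f z := by
  rw [differentiableAt_complex_iff_differentiableAt_real, and_iff_right hf, smul_eq_mul,
    wirtingerZBar]
  constructor <;> intro h
  · linear_combination (-2 * I) * h + fderiv ℝ f z I * I_mul_I
  · linear_combination (1 / 2 : ℂ) * I * h + (1 / 2 : ℂ) * fderiv ℝ f z 1 * I_mul_I

theorem wirtingerZBar_eq_zero_of_differentiableAt (hf : DifferentiableAt ℂ f z) :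
    wirtingerZBar f z = 0 :=
  (wirtingerZBar_eq_zero_iff (hf.restrictScalars ℝ)).2 hf

theorem wirtingerZBar_sub (hf : DifferentiableAt ℝ f z) (hg : DifferentiableAt ℝ g z) :
    wirtingerZBar (fun w => f w - g w) z = wirtingerZBar f z - wirtingerZBar g z := by
  simp only [wirtingerZBar, fderiv_fun_sub hf hg, sub_apply]
  ring

theorem wirtingerZBar_sum {ι : Type*} (s : Finset ι) {F : ι → ℂ → ℂ}
    (hF : ∀ i ∈ s, DifferentiableAt ℝ (F i) z) :
    wirtingerZBar (fun w => ∑ i ∈ s, F i w) z = ∑ i ∈ s, wirtingerZBar (F i) z := by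
  simp only [wirtingerZBar, fderiv_fun_sum hF, _root_.sum_apply, mul_sum, mul_add, sum_add_distrib]

theorem wirtingerZBar_mul (hf : DifferentiableAt ℝ f z) (hg : DifferentiableAt ℝ g z) :
    wirtingerZBar (fun w => f w * g w) z = wirtingerZBar f z * g z + f z * wirtingerZBar g z := by
  simp only [wirtingerZBar, fderiv_fun_mul hf hg, add_apply, smul_apply, smul_eq_mul]
  ring

theorem wirtingerZBar_pow (hf : DifferentiableAt ℝ f z) (k : ℕ) :
    wirtingerZBar (fun w => f w ^ k) z = k * f z ^ (k - 1) * wirtingerZBar f z := by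
  simp only [wirtingerZBar, fderiv_fun_pow k hf, smul_apply, smul_eq_mul, nsmul_eq_mul]
  ring

theorem wirtingerZBar_conj : wirtingerZBar (starRingEnd ℂ) z = 1 := by
  have h : fderiv ℝ (starRingEnd ℂ) z = conjCLE := conjCLE.fderiv
  norm_num [wirtingerZBar, h]

theorem differentiableAt_conj_pow_mul (hg : DifferentiableAt ℂ g z) (k : ℕ) :
    DifferentiableAt ℝ (fun w => starRingEnd ℂ w ^ k * g w) z :=
  ((conjCLE.differentiableAt (x := z)).fun_pow k).mul (hg.restrictScalars ℝ)

theorem wirtingerZBar_conj_pow_mul (hg : DifferentiableAt ℂ g z) (k : ℕ) :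
    wirtingerZBar (fun w => starRingEnd ℂ w ^ k * g w) z =
      k * starRingEnd ℂ z ^ (k - 1) * g z := by
  have hconj : DifferentiableAt ℝ (starRingEnd ℂ) z := conjCLE.differentiableAt
  rw [wirtingerZBar_mul (hconj.fun_pow k) (hg.restrictScalars ℝ), wirtingerZBar_pow hconj,
    wirtingerZBar_conj, wirtingerZBar_eq_zero_of_differentiableAt hg]
  ring

theorem ContDiff.wirtingerZBar {m : WithTop ℕ∞} (hf : ContDiff ℝ (m + 1) f) :
    ContDiff ℝ m (wirtingerZBar f) := by
  have hDf : ContDiff ℝ m (fderiv ℝ f) := hf.fderiv_right le_rfl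
  have hD1 := (ContinuousLinearMap.apply ℝ ℂ (1 : ℂ)).contDiff.comp hDf
  have hDI := (ContinuousLinearMap.apply ℝ ℂ I).contDiff.comp hDf
  exact contDiff_const.mul (hD1.add (contDiff_const.mul hDI))

end Calculus

section PolyanalyticSum

noncomputable def polyanalyticSum {m : ℕ} (fs : Fin m → ℂ → ℂ) : ℂ → ℂ :=
  fun z => ∑ k : Fin m, starRingEnd ℂ z ^ (k : ℕ) * fs k z

variable {m : ℕ}

theorem polyanalyticSum_succ (fs : Fin (m + 1) → ℂ → ℂ) (z : ℂ) :
    polyanalyticSum fs z = fs 0 z + starRingEnd ℂ z * polyanalyticSum (Fin.tail fs) z := by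
  simp only [polyanalyticSum, Fin.sum_univ_succ, Fin.val_zero, pow_zero, one_mul, Fin.val_succ,
    pow_succ, Fin.tail, mul_sum]
  congr 1
  exact sum_congr rfl fun _ _ => by ring

theorem polyanalyticSum_sub (fs gs : Fin m → ℂ → ℂ) :
    polyanalyticSum (fs - gs) = polyanalyticSum fs - polyanalyticSum gs := by
  funext z
  simp only [polyanalyticSum, Pi.sub_apply, mul_sub, sum_sub_distrib]

theorem differentiableAt_polyanalyticSum {fs : Fin m → ℂ → ℂ}
    (hfs : ∀ k, Differentiable ℂ (fs k)) (z : ℂ) :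
    DifferentiableAt ℝ (polyanalyticSum fs) z :=
  DifferentiableAt.fun_sum fun k _ => differentiableAt_conj_pow_mul (hfs k z) k

theorem wirtingerZBar_polyanalyticSum {fs : Fin (m + 1) → ℂ → ℂ}
    (hfs : ∀ k, Differentiable ℂ (fs k)) :
    wirtingerZBar (polyanalyticSum fs) =
      polyanalyticSum fun j w => ((j : ℂ) + 1) * fs j.succ w := by
  funext z
  unfold polyanalyticSum
  rw [wirtingerZBar_sum _ fun k _ => differentiableAt_conj_pow_mul (hfs k z) k]
  simp only [wirtingerZBar_conj_pow_mul (hfs _ z), Fin.sum_univ_succ, Fin.val_zero,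
    Nat.cast_zero, zero_mul, zero_add, Fin.val_succ, Nat.cast_succ, Nat.add_sub_cancel]
  exact sum_congr rfl fun _ _ => by ring

theorem eq_zero_of_polyanalyticSum_eq_zero {fs : Fin m → ℂ → ℂ}
    (hfs : ∀ k, Differentiable ℂ (fs k)) (h : polyanalyticSum fs = 0) : fs = 0 := by
  induction m with
  | zero => exact Subsingleton.elim _ _
  | succ m ih =>
    have htail : Fin.tail fs = 0 := by
      have hscaled := ih (fs := fun j w => ((j : ℂ) + 1) * fs j.succ w)
        (fun j => (differentiable_const _).mul (hfs j.succ))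
        (by rw [← wirtingerZBar_polyanalyticSum hfs, h]; funext z; simp [wirtingerZBar])
      funext j z
      simpa [Fin.tail, Nat.cast_add_one_ne_zero] using congr_fun (congr_fun hscaled j) z
    have hhead : fs 0 = 0 := by
      funext z
      have hz := congr_fun h z
      rw [polyanalyticSum_succ, htail] at hz
      simpa [polyanalyticSum] using hz
    funext k
    exact Fin.cases hhead (fun j => congr_fun htail j) k

theorem exists_wirtingerZBar_polyanalyticSum_eq {gs : Fin m → ℂ → ℂ}
    (hgs : ∀ k, Differentiable ℂ (gs k)) :
    ∃ hs : Fin (m + 1) → ℂ → ℂ, (∀ k, Differentiable ℂ (hs k)) ∧ hs 0 = 0 ∧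
      wirtingerZBar (polyanalyticSum hs) = polyanalyticSum gs := by
  set hs : Fin (m + 1) → ℂ → ℂ := Fin.cons 0 fun j w => ((j : ℂ) + 1)⁻¹ * gs j w
  have hhs : ∀ k, Differentiable ℂ (hs k) :=
    Fin.cases (differentiable_const 0) fun j => (differentiable_const _).mul (hgs j)
  refine ⟨hs, hhs, rfl, ?_⟩
  rw [wirtingerZBar_polyanalyticSum hhs]
  congr 1
  funext j w
  exact mul_inv_cancel_left₀ (Nat.cast_add_one_ne_zero (j : ℕ)) _

theorem exists_polyanalyticSum_eq {n : ℕ} {f : ℂ → ℂ} (hf : ContDiff ℝ (n + 1) f)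
    (hpoly : wirtingerZBar^[n + 1] f = 0) :
    ∃ fs : Fin (n + 1) → ℂ → ℂ, (∀ k, Differentiable ℂ (fs k)) ∧ f = polyanalyticSum fs := by
  induction n generalizing f with
  | zero =>
    have hdiff : Differentiable ℝ f := hf.differentiable (by simp)
    have hholo : Differentiable ℂ f := fun z =>
      (wirtingerZBar_eq_zero_iff (hdiff z)).1 (congr_fun hpoly z)
    exact ⟨fun _ => f, fun _ => hholo, by funext z; simp [polyanalyticSum]⟩
  | succ n ih =>
    push_cast at hf
    have hdiff : Differentiable ℝ f := hf.differentiable (by simp)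
    obtain ⟨gs, hgs, hfgs⟩ := ih hf.wirtingerZBar (by rwa [← Function.iterate_succ_apply])
    obtain ⟨hs, hhs, hhs0, hwhs⟩ := exists_wirtingerZBar_polyanalyticSum_eq hgs
    have hφ : Differentiable ℂ (fun z => f z - polyanalyticSum hs z) := fun z => by
      have hP := differentiableAt_polyanalyticSum hhs z
      rw [← wirtingerZBar_eq_zero_iff ((hdiff z).fun_sub hP), wirtingerZBar_sub (hdiff z) hP, hwhs,
        ← hfgs, sub_self]
    refine ⟨Fin.cons (fun z => f z - polyanalyticSum hs z) (Fin.tail hs),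
      Fin.cases hφ fun j => hhs j.succ, ?_⟩
    funext z
    rw [polyanalyticSum_succ, Fin.tail_cons, Fin.cons_zero, polyanalyticSum_succ hs, hhs0]
    simp

end PolyanalyticSum

theorem polyanalytic_decomposition (n : ℕ) (f : ℂ → ℂ)
    (hf : ContDiff ℝ (n + 1) f)
    (hpoly : wirtingerZBar^[n + 1] f = fun _ => 0) :
    ∃! fs : Fin (n + 1) → ℂ → ℂ,
      (∀ k, Differentiable ℂ (fs k)) ∧
        ∀ z : ℂ, f z = ∑ k : Fin (n + 1), ((starRingEnd ℂ) z) ^ (k : ℕ) * fs k z := by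
  obtain ⟨fs, hfs, hf_eq⟩ := exists_polyanalyticSum_eq hf hpoly
  refine ⟨fs, ⟨hfs, congr_fun hf_eq⟩, fun gs ⟨hgs, hg_eq⟩ => ?_⟩
  have hsub : polyanalyticSum (gs - fs) = 0 := by
    rw [polyanalyticSum_sub, ← hf_eq, show polyanalyticSum gs = f from (funext hg_eq).symm,
      sub_self]
  exact sub_eq_zero.1 (eq_zero_of_polyanalyticSum_eq_zero (fun k => (hgs k).sub (hfs k)) hsub)
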